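/- arXiv:2404.15179 — 2 statements merged into one kernel-verified Lean document; each statement's English description precedes it below -/
import Mathlib

section
/- If a d×d complex density matrix ρ (d ≥ 2) has real part equal to 𝟙/d, i.e., ρ = (1/d)(𝟙 + I) where I = (d/2)(ρ − ρᵀ), then S_I² ≤ (2/d)·⌊d/2⌋; in particular S_I ≤ 1 for even d and S_I² ≤ (d−1)/d for odd d. -/
/-!
Both `d • ρ = 1 + I` and its transpose `d • ρᵀ = 1 - I` are positive semidefinite, so the
eigenvalues `λᵢ` of the Hermitian matrix `I` lie in `[-1, 1]`; they sum to `Tr I = 0`.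
Hence `Tr(I²) = ∑ λᵢ² ≤ ∑ |λᵢ| = 2 ∑_{λᵢ > 0} λᵢ`, and the positive part is bounded both by the
number of positive and by the number of non-positive eigenvalues, hence by `⌊d/2⌋`.
-/

open Matrix
open scoped ComplexOrder

noncomputable section

/-- A density matrix: positive semidefinite with unit trace. -/
def IsDensityMatrix {d : ℕ} (ρ : Matrix (Fin d) (Fin d) ℂ) : Prop :=
  ρ.PosSemidef ∧ ρ.trace = 1

/-- The real part `R = (d/2)(ρ + ρᵀ)`. -/
def Rpart (d : ℕ) (ρ : Matrix (Fin d) (Fin d) ℂ) : Matrix (Fin d) (Fin d) ℂ :=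
  ((d : ℂ) / 2) • (ρ + ρ.transpose)

/-- The imaginary part `I = (d/2)(ρ − ρᵀ)`. -/
def Ipart (d : ℕ) (ρ : Matrix (Fin d) (Fin d) ℂ) : Matrix (Fin d) (Fin d) ℂ :=
  ((d : ℂ) / 2) • (ρ - ρ.transpose)

/-- `S_R = √(Tr(R²)/d − 1)`. -/
def SR (d : ℕ) (ρ : Matrix (Fin d) (Fin d) ℂ) : ℝ :=
  Real.sqrt ((Rpart d ρ * Rpart d ρ).trace.re / d - 1)

/-- `S_I = √(Tr(I²)/d)`. -/
def SI (d : ℕ) (ρ : Matrix (Fin d) (Fin d) ℂ) : ℝ :=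
  Real.sqrt ((Ipart d ρ * Ipart d ρ).trace.re / d)

theorem sum_sq_le_two_mul_card_div_two {ι : Type*} [Fintype ι] (f : ι → ℝ)
    (hsum : ∑ i, f i = 0) (hf : ∀ i, |f i| ≤ 1) :
    ∑ i, f i ^ 2 ≤ 2 * ((Fintype.card ι / 2 : ℕ) : ℝ) := by
  classical
  set P := Finset.univ.filter (fun i => 0 < f i)
  set N := Finset.univ.filter (fun i => ¬ 0 < f i)
  set s := ∑ i ∈ P, f i
  have hsplit : s + ∑ i ∈ N, f i = 0 :=
    (Finset.sum_filter_add_sum_filter_not _ _ _).trans hsum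
  have hsP : s ≤ P.card := by
    simpa using Finset.sum_le_card_nsmul P f 1 fun i _ => (abs_le.mp (hf i)).2
  have hsN : s ≤ N.card := by
    have := Finset.sum_le_card_nsmul N (fun i => -f i) 1 fun i _ => by
      linarith [(abs_le.mp (hf i)).1]
    simp only [Finset.sum_neg_distrib, nsmul_eq_mul, mul_one] at this
    linarith
  have hcard : P.card + N.card = Fintype.card ι :=
    Finset.card_filter_add_card_filter_not _
  have hmin : min P.card N.card ≤ Fintype.card ι / 2 := by omega
  have habs : ∑ i, |f i| = 2 * s := by
    rw [← Finset.sum_filter_add_sum_filter_not Finset.univ (fun i => 0 < f i),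
      Finset.sum_congr rfl fun i hi => abs_of_pos (Finset.mem_filter.mp hi).2,
      Finset.sum_congr rfl fun i hi => abs_of_nonpos (not_lt.mp (Finset.mem_filter.mp hi).2),
      Finset.sum_neg_distrib]
    linarith
  calc ∑ i, f i ^ 2 ≤ ∑ i, |f i| := Finset.sum_le_sum fun i _ => by
        rw [← sq_abs]; nlinarith [hf i, abs_nonneg (f i)]
    _ = 2 * s := habs
    _ ≤ 2 * ((min P.card N.card : ℕ) : ℝ) := by
        rw [Nat.cast_min]; exact mul_le_mul_of_nonneg_left (le_min hsP hsN) zero_le_two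
    _ ≤ 2 * ((Fintype.card ι / 2 : ℕ) : ℝ) := by gcongr

theorem two_div_mul_div_two_of_even {d : ℕ} (hd : d ≠ 0) (h : Even d) :
    2 / (d : ℝ) * ((d / 2 : ℕ) : ℝ) = 1 := by
  rw [Nat.cast_div h.two_dvd two_ne_zero]
  field_simp
  norm_num

theorem two_div_mul_div_two_of_odd {d : ℕ} (h : Odd d) :
    2 / (d : ℝ) * ((d / 2 : ℕ) : ℝ) = ((d : ℝ) - 1) / d := by
  obtain ⟨k, rfl⟩ := h
  rw [show (2 * k + 1) / 2 = k by omega]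
  push_cast
  ring

namespace Matrix.IsHermitian

variable {n 𝕜 : Type*} [Fintype n] [DecidableEq n] [RCLike 𝕜] {A : Matrix n n 𝕜}

theorem trace_mul_self (hA : A.IsHermitian) :
    (A * A).trace = ∑ i, (hA.eigenvalues i : 𝕜) ^ 2 := by
  conv_lhs => rw [hA.spectral_theorem, ← map_mul, Unitary.conjStarAlgAut_apply, trace_mul_cycle,
    Unitary.coe_star_mul_self, one_mul, diagonal_mul_diagonal, trace_diagonal]
  simp [sq]

theorem abs_eigenvalues_le_one (hA : A.IsHermitian) (hplus : (1 + A).PosSemidef)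
    (hminus : (1 - A).PosSemidef) (i : n) : |hA.eigenvalues i| ≤ 1 := by
  set v := ⇑(hA.eigenvectorBasis i)
  have hv : RCLike.re (star v ⬝ᵥ v) = 1 := by
    rw [dotProduct_comm, ← EuclideanSpace.inner_eq_star_dotProduct, inner_self_eq_norm_sq,
      hA.eigenvectorBasis.orthonormal.1 i, one_pow]
  have h₁ := hplus.re_dotProduct_nonneg v
  have h₂ := hminus.re_dotProduct_nonneg v
  rw [add_mulVec, one_mulVec, dotProduct_add, map_add, hv, ← hA.eigenvalues_eq] at h₁
  rw [sub_mulVec, one_mulVec, dotProduct_sub, map_sub, hv, ← hA.eigenvalues_eq] at h₂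
  exact abs_le.mpr ⟨by linarith, by linarith⟩

end Matrix.IsHermitian

theorem Ipart_transpose (d : ℕ) (ρ : Matrix (Fin d) (Fin d) ℂ) :
    (Ipart d ρ)ᵀ = -Ipart d ρ := by
  rw [Ipart, transpose_smul, transpose_sub, transpose_transpose, ← smul_neg, neg_sub]

theorem trace_Ipart (d : ℕ) (ρ : Matrix (Fin d) (Fin d) ℂ) : (Ipart d ρ).trace = 0 := by
  rw [Ipart, trace_smul, trace_sub, trace_transpose, sub_self, smul_zero]

theorem sum_eigenvalues_Ipart_eq_zero {d : ℕ} {ρ : Matrix (Fin d) (Fin d) ℂ}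
    (hI : (Ipart d ρ).IsHermitian) : ∑ i, hI.eigenvalues i = 0 := by
  have h := hI.trace_eq_sum_eigenvalues
  rwa [trace_Ipart, ← RCLike.ofReal_sum, eq_comm, RCLike.ofReal_eq_zero] at h

theorem posSemidef_one_add_Ipart {d : ℕ} (hd : d ≠ 0) {ρ : Matrix (Fin d) (Fin d) ℂ}
    (hρ : ρ.PosSemidef) (hreal : ρ = ((d : ℂ))⁻¹ • (1 + Ipart d ρ)) :
    (1 + Ipart d ρ).PosSemidef := by
  have h : 1 + Ipart d ρ = (d : ℂ) • ρ := by
    conv_rhs => rw [hreal, smul_smul, mul_inv_cancel₀ (Nat.cast_ne_zero.mpr hd), one_smul]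
  exact h ▸ hρ.smul (Nat.cast_nonneg d)

theorem posSemidef_one_sub_Ipart {d : ℕ} {ρ : Matrix (Fin d) (Fin d) ℂ}
    (h : (1 + Ipart d ρ).PosSemidef) : (1 - Ipart d ρ).PosSemidef := by
  simpa [Ipart_transpose, sub_eq_add_neg] using h.transpose

theorem SI_sq_eq_sum_eigenvalues_sq (d : ℕ) (ρ : Matrix (Fin d) (Fin d) ℂ)
    (hI : (Ipart d ρ).IsHermitian) : SI d ρ ^ 2 = (∑ i, hI.eigenvalues i ^ 2) / d := by
  rw [SI, hI.trace_mul_self]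
  simp only [← RCLike.ofReal_pow, ← RCLike.ofReal_sum]
  rw [← RCLike.re_to_complex, RCLike.ofReal_re]
  exact Real.sq_sqrt (by positivity)

/-- If a `d×d` density matrix (`d ≥ 2`) has real part `𝟙/d`, i.e.
`ρ = (1/d)(𝟙 + I)`, then `S_I² ≤ (2/d)·⌊d/2⌋`; in particular `S_I ≤ 1` for even `d`
and `S_I² ≤ (d−1)/d` for odd `d`. -/
theorem imaginary_axis_bound (d : ℕ) (hd : 2 ≤ d) (ρ : Matrix (Fin d) (Fin d) ℂ)
    (hρ : IsDensityMatrix ρ)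
    (hreal : ρ = ((d : ℂ))⁻¹ • (1 + Ipart d ρ)) :
    SI d ρ ^ 2 ≤ (2 / (d : ℝ)) * ((d / 2 : ℕ) : ℝ) ∧
    (Even d → SI d ρ ≤ 1) ∧
    (Odd d → SI d ρ ^ 2 ≤ ((d : ℝ) - 1) / d) := by
  have hd0 : d ≠ 0 := by omega
  have hplus := posSemidef_one_add_Ipart hd0 hρ.1 hreal
  have hI : (Ipart d ρ).IsHermitian := by simpa using hplus.isHermitian.sub isHermitian_one
  have hbound : SI d ρ ^ 2 ≤ 2 / (d : ℝ) * ((d / 2 : ℕ) : ℝ) := by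
    have h := sum_sq_le_two_mul_card_div_two hI.eigenvalues (sum_eigenvalues_Ipart_eq_zero hI)
      (hI.abs_eigenvalues_le_one hplus (posSemidef_one_sub_Ipart hplus))
    rw [Fintype.card_fin] at h
    rw [SI_sq_eq_sum_eigenvalues_sq d ρ hI, div_mul_eq_mul_div]
    exact div_le_div_of_nonneg_right h (Nat.cast_nonneg d)
  refine ⟨hbound, fun heven => ?_, fun hodd => ?_⟩
  · rw [two_div_mul_div_two_of_even hd0 heven] at hbound
    exact (sq_le_one_iff₀ (Real.sqrt_nonneg _)).mp hbound
  · rwa [two_div_mul_div_two_of_odd hodd] at hbound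
end
end

section
/- For every d×d complex density matrix ρ in odd dimension d ≥ 3 with S_R < 1/√(d−1), the quadratic bound is strict: S_I² < 1 + S_R². (Hence the bound S_I² ≤ 1 + S_R² cannot be saturated in odd dimensions when S_R < 1/√(d−1).) -/
/-!
Both quantities are affine in `Tr ρ²` and `Tr ρρᵀ`: `Tr(R²)/d = (d/2)(Tr ρ² + Tr ρρᵀ)` and
`Tr(I²)/d = (d/2)(Tr ρ² − Tr ρρᵀ)`. Hence `S_I² < 1 + S_R²` as soon as `Tr ρρᵀ > 0`.
Since `ρᵀ` is again positive semidefinite, `Tr ρρᵀ = ‖√ρ √ρᵀ‖²_F ≥ 0`, with equality only if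
`ρρᵀ = 0`. In that case `rank ρ + rank ρᵀ ≤ d`, which for odd `d` forces `2 rank ρ ≤ d − 1`;
Cauchy–Schwarz on the eigenvalues gives `1 = (Tr ρ)² ≤ rank ρ · Tr ρ²`, so
`S_R² ≥ (d/2) Tr ρ² − 1 ≥ 1/(d − 1)`, contradicting `S_R < 1/√(d − 1)`.
-/

open Matrix
open scoped ComplexOrder

noncomputable section

lemma mul_sq_lt_one_of_lt_one_div_sqrt {a c : ℝ} (ha : 0 ≤ a) (h : a < 1 / √c) :
    c * a ^ 2 < 1 := by
  rcases le_or_gt c 0 with hc | hc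
  · nlinarith [sq_nonneg a]
  · have : a * √c < 1 := (lt_div_iff₀ (Real.sqrt_pos.mpr hc)).mp h
    have hsq : (a * √c) ^ 2 < 1 := pow_lt_one₀ (by positivity) this two_ne_zero
    rwa [mul_pow, Real.sq_sqrt hc.le, mul_comm] at hsq

lemma Complex.re_natCast_sq_div_two_mul_div_natCast (d : ℕ) (z : ℂ) :
    ((d : ℂ) ^ 2 / 2 * z).re / d = (d : ℝ) / 2 * z.re := by
  rw [show (d : ℂ) ^ 2 / 2 = ((d ^ 2 / 2 : ℝ) : ℂ) by push_cast; rfl, Complex.re_ofReal_mul]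
  rcases eq_or_ne (d : ℝ) 0 with hd | hd
  · simp [hd]
  · field_simp

namespace Matrix

variable {𝕜 n : Type*} [RCLike 𝕜] [Fintype n]

lemma IsHermitian.trace_mul_self_eq_sum_eigenvalues_sq [DecidableEq n] {A : Matrix n n 𝕜}
    (hA : A.IsHermitian) : (A * A).trace = ∑ i, (hA.eigenvalues i : 𝕜) ^ 2 := by
  conv_lhs => rw [hA.spectral_theorem, ← map_mul, Unitary.conjStarAlgAut_apply, trace_mul_cycle,
    Unitary.coe_star_mul_self, one_mul, diagonal_mul_diagonal, trace_diagonal]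
  simp [sq]

lemma IsHermitian.re_trace_sq_le_rank_mul_re_trace_mul_self {A : Matrix n n 𝕜}
    (hA : A.IsHermitian) : RCLike.re A.trace ^ 2 ≤ A.rank * RCLike.re (A * A).trace := by
  classical
  set μ := hA.eigenvalues
  set s := Finset.univ.filter fun i => μ i ≠ 0
  have htrace : RCLike.re A.trace = ∑ i ∈ s, μ i := by
    simp [hA.trace_eq_sum_eigenvalues, s, Finset.sum_filter_ne_zero, μ]
  have hrank : A.rank = s.card := by
    rw [hA.rank_eq_card_non_zero_eigs, Fintype.card_subtype]
  have htrace_sq : ∑ i ∈ s, μ i ^ 2 ≤ RCLike.re (A * A).trace := by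
    rw [hA.trace_mul_self_eq_sum_eigenvalues_sq]
    simp only [map_sum, ← RCLike.ofReal_pow, RCLike.ofReal_re]
    exact Finset.sum_le_sum_of_subset_of_nonneg (Finset.filter_subset _ _)
      fun i _ _ => sq_nonneg _
  rw [htrace, hrank]
  exact sq_sum_le_card_mul_sum_sq.trans (by gcongr)

open scoped MatrixOrder in
lemma PosSemidef.trace_mul_eq_trace_mul_conjTranspose_self [DecidableEq n]
    {A B : Matrix n n 𝕜} (hA : A.PosSemidef) (hB : B.PosSemidef) :
    (A * B).trace = (CFC.sqrt A * CFC.sqrt B * (CFC.sqrt A * CFC.sqrt B)ᴴ).trace := by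
  have hsA : (CFC.sqrt A)ᴴ = CFC.sqrt A :=
    (nonneg_iff_posSemidef.mp (CFC.sqrt_nonneg A)).isHermitian
  have hsB : (CFC.sqrt B)ᴴ = CFC.sqrt B :=
    (nonneg_iff_posSemidef.mp (CFC.sqrt_nonneg B)).isHermitian
  conv_lhs => rw [← CFC.sqrt_mul_sqrt_self A hA.nonneg, ← CFC.sqrt_mul_sqrt_self B hB.nonneg]
  rw [conjTranspose_mul, hsA, hsB, mul_assoc, trace_mul_comm]
  simp only [mul_assoc]

lemma PosSemidef.trace_mul_nonneg {A B : Matrix n n 𝕜} (hA : A.PosSemidef) (hB : B.PosSemidef) :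
    0 ≤ (A * B).trace := by
  classical
  rw [hA.trace_mul_eq_trace_mul_conjTranspose_self hB]
  exact (posSemidef_self_mul_conjTranspose _).trace_nonneg

open scoped MatrixOrder in
lemma PosSemidef.trace_mul_eq_zero_iff {A B : Matrix n n 𝕜} (hA : A.PosSemidef)
    (hB : B.PosSemidef) : (A * B).trace = 0 ↔ A * B = 0 := by
  classical
  refine ⟨fun h => ?_, fun h => by rw [h, trace_zero]⟩
  rw [hA.trace_mul_eq_trace_mul_conjTranspose_self hB,
    trace_mul_conjTranspose_self_eq_zero_iff] at h
  rw [← CFC.sqrt_mul_sqrt_self A hA.nonneg, ← CFC.sqrt_mul_sqrt_self B hB.nonneg, mul_assoc,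
    ← mul_assoc (CFC.sqrt A) (CFC.sqrt B), h, zero_mul, mul_zero]

lemma two_mul_rank_lt_of_mul_transpose_eq_zero {K : Type*} [Field K] (hn : Odd (Fintype.card n))
    {A : Matrix n n K} (h : A * Aᵀ = 0) : 2 * A.rank < Fintype.card n := by
  have := rank_add_rank_le_card_of_mul_eq_zero h
  rw [rank_transpose] at this
  obtain ⟨k, hk⟩ := hn
  omega

end Matrix

section DensityMatrix

variable {d : ℕ} (ρ : Matrix (Fin d) (Fin d) ℂ)

lemma trace_Rpart_mul_self :
    (Rpart d ρ * Rpart d ρ).trace = (d : ℂ) ^ 2 / 2 * ((ρ * ρ).trace + (ρ * ρᵀ).trace) := by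
  simp only [Rpart, smul_mul_smul, add_mul, mul_add, trace_smul, trace_add, smul_eq_mul,
    ← transpose_mul, trace_transpose, trace_mul_comm ρᵀ ρ]
  ring

lemma trace_Ipart_mul_self :
    (Ipart d ρ * Ipart d ρ).trace = (d : ℂ) ^ 2 / 2 * ((ρ * ρ).trace - (ρ * ρᵀ).trace) := by
  simp only [Ipart, smul_mul_smul, sub_mul, mul_sub, trace_smul, trace_sub, smul_eq_mul,
    ← transpose_mul, trace_transpose, trace_mul_comm ρᵀ ρ]
  ring

lemma SR_sq :
    SR d ρ ^ 2 = max ((d : ℝ) / 2 * ((ρ * ρ).trace.re + (ρ * ρᵀ).trace.re) - 1) 0 := by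
  rw [SR, Real.sq_sqrt', trace_Rpart_mul_self, Complex.re_natCast_sq_div_two_mul_div_natCast,
    Complex.add_re]

lemma SI_sq : SI d ρ ^ 2 = max ((d : ℝ) / 2 * ((ρ * ρ).trace.re - (ρ * ρᵀ).trace.re)) 0 := by
  rw [SI, Real.sq_sqrt', trace_Ipart_mul_self, Complex.re_natCast_sq_div_two_mul_div_natCast,
    Complex.sub_re]

end DensityMatrix

lemma IsDensityMatrix.one_le_rank_mul_re_trace_mul_self {d : ℕ} {ρ : Matrix (Fin d) (Fin d) ℂ}
    (hρ : IsDensityMatrix ρ) : 1 ≤ ρ.rank * (ρ * ρ).trace.re := by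
  simpa [hρ.2] using hρ.1.isHermitian.re_trace_sq_le_rank_mul_re_trace_mul_self

lemma IsDensityMatrix.one_le_sub_one_mul_SR_sq {d : ℕ} (hd : Odd d)
    {ρ : Matrix (Fin d) (Fin d) ℂ} (hρ : IsDensityMatrix ρ) (hperp : ρ * ρᵀ = 0) :
    1 ≤ ((d : ℝ) - 1) * SR d ρ ^ 2 := by
  have hrank : 2 * (ρ.rank : ℝ) + 1 ≤ d := by
    have := two_mul_rank_lt_of_mul_transpose_eq_zero (by simpa using hd) hperp
    rw [Fintype.card_fin] at this
    exact_mod_cast this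
  have hpurity := hρ.one_le_rank_mul_re_trace_mul_self
  have ht : 0 ≤ (ρ * ρ).trace.re := (Complex.nonneg_iff.mp (hρ.1.trace_mul_nonneg hρ.1)).1
  have hSR_ge : (d : ℝ) / 2 * (ρ * ρ).trace.re - 1 ≤ SR d ρ ^ 2 := by
    rw [SR_sq, hperp, trace_zero, Complex.zero_re, add_zero]
    exact le_max_left _ _
  have hd1 : (0 : ℝ) ≤ d - 1 := by linarith [Nat.cast_nonneg (α := ℝ) ρ.rank]
  nlinarith [mul_le_mul_of_nonneg_left hSR_ge hd1,
    mul_nonneg (by linarith : (0 : ℝ) ≤ d - 1 - 2 * ρ.rank) ht,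
    mul_le_mul_of_nonneg_left hpurity (Nat.cast_nonneg (α := ℝ) d)]

lemma IsDensityMatrix.re_trace_mul_transpose_pos {d : ℕ} (hd : Odd d)
    {ρ : Matrix (Fin d) (Fin d) ℂ} (hρ : IsDensityMatrix ρ)
    (hSR : SR d ρ < 1 / √((d : ℝ) - 1)) : 0 < (ρ * ρᵀ).trace.re := by
  obtain ⟨hre, him⟩ := Complex.nonneg_iff.mp (hρ.1.trace_mul_nonneg hρ.1.transpose)
  refine lt_of_le_of_ne hre fun hzero => ?_
  have hperp : ρ * ρᵀ = 0 :=
    (hρ.1.trace_mul_eq_zero_iff hρ.1.transpose).mp (Complex.ext hzero.symm him.symm)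
  have hsmall := mul_sq_lt_one_of_lt_one_div_sqrt (a := SR d ρ) (Real.sqrt_nonneg _) hSR
  exact (hρ.one_le_sub_one_mul_SR_sq hd hperp).not_gt hsmall

theorem quadratic_bound_strict_odd_general (d : ℕ) (hdodd : Odd d)
    (ρ : Matrix (Fin d) (Fin d) ℂ) (hρ : IsDensityMatrix ρ)
    (hSR : SR d ρ < 1 / Real.sqrt ((d : ℝ) - 1)) :
    SI d ρ ^ 2 < 1 + SR d ρ ^ 2 := by
  have hx : 0 < (d : ℝ) / 2 * (ρ * ρᵀ).trace.re :=
    mul_pos (by simpa using hdodd.pos) (hρ.re_trace_mul_transpose_pos hdodd hSR)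
  rw [SI_sq, SR_sq]
  refine max_lt ?_ (by positivity)
  linarith [le_max_left ((d : ℝ) / 2 * ((ρ * ρ).trace.re + (ρ * ρᵀ).trace.re) - 1) 0]

/-- For every `d×d` density matrix in odd dimension `d ≥ 3` with
`S_R < 1/√(d−1)`, the quadratic bound is strict: `S_I² < 1 + S_R²`. -/
theorem quadratic_bound_strict_odd (d : ℕ) (hd : 3 ≤ d) (hdodd : Odd d)
    (ρ : Matrix (Fin d) (Fin d) ℂ) (hρ : IsDensityMatrix ρ)
    (hSR : SR d ρ < 1 / Real.sqrt ((d : ℝ) - 1)) :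
    SI d ρ ^ 2 < 1 + SR d ρ ^ 2 :=
  quadratic_bound_strict_odd_general d hdodd ρ hρ hSR
end
end
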